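/- Let λ > 0, t > 0, let c₁, c₂ : ℝ → (0,∞) be continuous such that Φ₁(x) = ∫₀^x dw/c₁(w) and Φ₂(y) = ∫₀^y dz/c₂(z) are surjections of ℝ onto ℝ, and let D = {(x,y) : Φ₁(x)² + Φ₂(y)² < t²}. Then ∬_D (λ/(2π c₁(x) c₂(y))) · exp( −λt + λ√(t² − Φ₁(x)² − Φ₂(y)²) ) / √(t² − Φ₁(x)² − Φ₂(y)²) dx dy = 1 − e^{−λt}; equivalently, ∬_{{u²+v²<t²}} (λ/(2π)) e^{−λt + λ√(t²−u²−v²)} / √(t²−u²−v²) du dv = 1 − e^{−λt}. Hence the absolutely continuous component of the planar law has total mass 1 − e^{−λt}. -/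

import Mathlib

open Real MeasureTheory

/-- `Φ_c x = ∫₀ˣ dw / c(w)`. -/
noncomputable def Phi (c : ℝ → ℝ) (x : ℝ) : ℝ := ∫ w in (0:ℝ)..x, (c w)⁻¹

/-! Substituting `(u, v) = (Φ₁ x, Φ₂ y)`, whose Jacobian is `1 / (c₁ x c₂ y)`, turns the first
integral into the second. In polar coordinates the second becomes
`∫₀ᵗ λ r e^{-λt + λ√(t² - r²)} / √(t² - r²) dr`, and `-e^{λ√(t² - r²)}` is an antiderivative of
`λ r e^{λ√(t² - r²)} / √(t² - r²)`. -/

open Set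

section Phi

variable {c : ℝ → ℝ}

theorem hasDerivAt_Phi (hc : Continuous c) (hc0 : ∀ x, c x ≠ 0) (x : ℝ) :
    HasDerivAt (Phi c) (c x)⁻¹ x :=
  have hinv : Continuous fun w => (c w)⁻¹ := hc.inv₀ hc0
  intervalIntegral.integral_hasDerivAt_right (hinv.intervalIntegrable 0 x)
    (hinv.stronglyMeasurableAtFilter _ _) hinv.continuousAt

theorem strictMono_Phi (hc : Continuous c) (hpos : ∀ x, 0 < c x) : StrictMono (Phi c) :=
  strictMono_of_hasDerivAt_pos (hasDerivAt_Phi hc fun x => (hpos x).ne')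
    fun x => inv_pos.mpr (hpos x)

end Phi

theorem setIntegral_preimage_prodMap {E : Type*} [NormedAddCommGroup E] [NormedSpace ℝ E]
    {φ ψ φ' ψ' : ℝ → ℝ} (hφ : ∀ x, HasDerivAt φ (φ' x) x) (hψ : ∀ y, HasDerivAt ψ (ψ' y) y)
    (hφinj : φ.Injective) (hψinj : ψ.Injective) (hφsurj : φ.Surjective) (hψsurj : ψ.Surjective)
    {D : Set (ℝ × ℝ)} (hD : MeasurableSet D) (g : ℝ × ℝ → E) :
    ∫ z in Prod.map φ ψ ⁻¹' D, |φ' z.1 * ψ' z.2| • g (φ z.1, ψ z.2) = ∫ z in D, g z := by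
  have hder : ∀ z : ℝ × ℝ, HasFDerivAt (Prod.map φ ψ)
      ((ContinuousLinearMap.smulRight 1 (φ' z.1)).prodMap
        (ContinuousLinearMap.smulRight 1 (ψ' z.2))) z :=
    fun z => HasFDerivAt.prodMap z (hφ z.1).hasFDerivAt (hψ z.2).hasFDerivAt
  have hmeas : MeasurableSet (Prod.map φ ψ ⁻¹' D) :=
    hD.preimage (continuous_iff_continuousAt.2 fun z => (hder z).continuousAt).measurable
  have hcov := integral_image_eq_integral_abs_det_fderiv_smul volume hmeas
    (fun z _ => (hder z).hasFDerivWithinAt) (hφinj.prodMap hψinj).injOn g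
  rw [image_preimage_eq D (hφsurj.prodMap hψsurj)] at hcov
  rw [hcov]
  refine setIntegral_congr_fun hmeas fun z _ => ?_
  rw [ContinuousLinearMap.det, ContinuousLinearMap.coe_prodMap, LinearMap.det_prodMap]
  simp [Prod.map]

theorem measurableSet_sq_add_sq_lt (a : ℝ) : MeasurableSet {z : ℝ × ℝ | z.1 ^ 2 + z.2 ^ 2 < a} :=
  measurableSet_lt (by fun_prop) measurable_const

theorem setIntegral_disc_comp_sq_add_sq (f : ℝ → ℝ) {R : ℝ} (hR : 0 ≤ R) :
    ∫ z in {z : ℝ × ℝ | z.1 ^ 2 + z.2 ^ 2 < R ^ 2}, f (z.1 ^ 2 + z.2 ^ 2) =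
      2 * π * ∫ r in Ioo 0 R, r * f (r ^ 2) := by
  set D := {z : ℝ × ℝ | z.1 ^ 2 + z.2 ^ 2 < R ^ 2}
  set F : ℝ × ℝ → ℝ := fun z => f (z.1 ^ 2 + z.2 ^ 2)
  have hpolar : ∀ p ∈ polarCoord.target,
      p.1 • D.indicator F (polarCoord.symm p) =
        (Ioo 0 R).indicator (fun r => r * f (r ^ 2)) p.1 * 1 := by
    rintro ⟨r, θ⟩ ⟨hr, -⟩
    have hsq : (r * cos θ) ^ 2 + (r * sin θ) ^ 2 = r ^ 2 := by
      linear_combination r ^ 2 * sin_sq_add_cos_sq θ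
    have hmem : (r * cos θ, r * sin θ) ∈ D ↔ r ∈ Ioo 0 R := by
      simp only [D, mem_ofPred_eq, hsq, mem_Ioo, show 0 < r from hr, true_and]
      exact pow_lt_pow_iff_left₀ hr.le hR two_ne_zero
    simp only [polarCoord_symm_apply, indicator, hmem, F, hsq, smul_eq_mul, mul_one]
    split_ifs <;> simp
  have htarget : polarCoord.target = Ioi (0 : ℝ) ×ˢ Ioo (-π) π := rfl
  rw [← integral_indicator (measurableSet_sq_add_sq_lt _), ← integral_comp_polarCoord_symm,
    setIntegral_congr_fun polarCoord.open_target.measurableSet hpolar, htarget,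
    Measure.volume_eq_prod,
    setIntegral_prod_mul ((Ioo 0 R).indicator fun r => r * f (r ^ 2)) (fun _ => 1),
    setIntegral_indicator measurableSet_Ioo,
    inter_eq_right.2 Ioo_subset_Ioi_self, setIntegral_const,
    volume_real_Ioo_of_le (by linarith [pi_pos])]
  simp only [smul_eq_mul, mul_one]
  ring

theorem integral_Ioo_mul_exp_sqrt_div_sqrt {lam t : ℝ} (hlam : 0 ≤ lam) (ht : 0 ≤ t) :
    ∫ r in Ioo 0 t, lam * r * exp (lam * √(t ^ 2 - r ^ 2)) / √(t ^ 2 - r ^ 2) =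
      exp (lam * t) - 1 := by
  set F : ℝ → ℝ := fun r => -exp (lam * √(t ^ 2 - r ^ 2))
  have hderiv : ∀ r ∈ Ioo 0 t,
      HasDerivAt F (lam * r * exp (lam * √(t ^ 2 - r ^ 2)) / √(t ^ 2 - r ^ 2)) r := by
    rintro r ⟨hr, hrt⟩
    have hpos : 0 < t ^ 2 - r ^ 2 := by nlinarith
    have hinner : HasDerivAt (fun r : ℝ => t ^ 2 - r ^ 2) (-(2 * r)) r := by
      simpa using (hasDerivAt_pow 2 r).const_sub (t ^ 2)
    have hsqrt := (hasDerivAt_sqrt hpos.ne').comp r hinner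
    refine ((hsqrt.const_mul lam).exp.neg).congr_deriv ?_
    simp only [Function.comp_apply]
    field_simp
  have hnonneg : ∀ r ∈ Ioo 0 t,
      0 ≤ lam * r * exp (lam * √(t ^ 2 - r ^ 2)) / √(t ^ 2 - r ^ 2) :=
    fun r hr => by have := hr.1; positivity
  have hcont : ContinuousOn F (Icc 0 t) := by fun_prop
  have hint : IntervalIntegrable
      (fun r => lam * r * exp (lam * √(t ^ 2 - r ^ 2)) / √(t ^ 2 - r ^ 2)) volume 0 t := by
    apply intervalIntegral.intervalIntegrable_deriv_of_nonneg (g := F) <;>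
      simpa only [uIcc_of_le ht, min_eq_left ht, max_eq_right ht]
  rw [← integral_Ioc_eq_integral_Ioo, ← intervalIntegral.integral_of_le ht,
    intervalIntegral.integral_eq_sub_of_hasDerivAt_of_le ht hcont hderiv hint]
  simp [F, sqrt_sq ht]
  ring

theorem setIntegral_disc_planar_density {lam t : ℝ} (hlam : 0 ≤ lam) (ht : 0 ≤ t) :
    ∫ z in {z : ℝ × ℝ | z.1 ^ 2 + z.2 ^ 2 < t ^ 2},
        lam / (2 * π) * exp (-(lam * t) + lam * √(t ^ 2 - z.1 ^ 2 - z.2 ^ 2))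
          / √(t ^ 2 - z.1 ^ 2 - z.2 ^ 2) =
      1 - exp (-(lam * t)) := by
  have hradial := setIntegral_disc_comp_sq_add_sq
    (fun s => lam / (2 * π) * exp (-(lam * t) + lam * √(t ^ 2 - s)) / √(t ^ 2 - s)) ht
  simp only [sub_sub] at hradial ⊢
  rw [hradial]
  have hfactor : ∀ r : ℝ,
      r * (lam / (2 * π) * exp (-(lam * t) + lam * √(t ^ 2 - r ^ 2)) / √(t ^ 2 - r ^ 2)) =
        exp (-(lam * t)) / (2 * π) *
          (lam * r * exp (lam * √(t ^ 2 - r ^ 2)) / √(t ^ 2 - r ^ 2)) := by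
    intro r
    rw [exp_add]
    ring
  simp only [hfactor, integral_const_mul, integral_Ioo_mul_exp_sqrt_div_sqrt hlam ht]
  field_simp
  rw [mul_sub, ← exp_add]
  simp

theorem planar_ac_component_total_mass
    (lam t : ℝ) (hlam : 0 < lam) (ht : 0 < t)
    (c₁ c₂ : ℝ → ℝ) (hc₁ : Continuous c₁) (hc₂ : Continuous c₂)
    (hc₁pos : ∀ x, 0 < c₁ x) (hc₂pos : ∀ y, 0 < c₂ y)
    (hsurj₁ : Function.Surjective (Phi c₁)) (hsurj₂ : Function.Surjective (Phi c₂)) :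
    (∫ z in {z : ℝ × ℝ | (Phi c₁ z.1)^2 + (Phi c₂ z.2)^2 < t^2},
        (lam / (2 * Real.pi * c₁ z.1 * c₂ z.2)) *
          Real.exp (-(lam*t) + lam * Real.sqrt (t^2 - (Phi c₁ z.1)^2 - (Phi c₂ z.2)^2))
            / Real.sqrt (t^2 - (Phi c₁ z.1)^2 - (Phi c₂ z.2)^2)
      = 1 - Real.exp (-(lam*t))) ∧
    (∫ z in {z : ℝ × ℝ | z.1^2 + z.2^2 < t^2},
        (lam / (2 * Real.pi)) *
          Real.exp (-(lam*t) + lam * Real.sqrt (t^2 - z.1^2 - z.2^2))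
            / Real.sqrt (t^2 - z.1^2 - z.2^2)
      = 1 - Real.exp (-(lam*t))) := by
  have hdisc := setIntegral_disc_planar_density hlam.le ht.le
  refine ⟨?_, hdisc⟩
  have hcov := setIntegral_preimage_prodMap (hasDerivAt_Phi hc₁ fun x => (hc₁pos x).ne')
    (hasDerivAt_Phi hc₂ fun y => (hc₂pos y).ne') (strictMono_Phi hc₁ hc₁pos).injective
    (strictMono_Phi hc₂ hc₂pos).injective hsurj₁ hsurj₂
    (measurableSet_sq_add_sq_lt (t ^ 2))
    (fun z : ℝ × ℝ => lam / (2 * π) * exp (-(lam * t) + lam * √(t ^ 2 - z.1 ^ 2 - z.2 ^ 2))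
      / √(t ^ 2 - z.1 ^ 2 - z.2 ^ 2))
  rw [← hdisc, ← hcov]
  refine integral_congr_ae (ae_of_all _ fun z => ?_)
  have hc₁z := hc₁pos z.1
  have hc₂z := hc₂pos z.2
  dsimp only
  rw [abs_of_pos (by positivity), smul_eq_mul]
  field_simp
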